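/- arXiv:2605.23539 — 9 statements merged into one kernel-verified Lean document; each statement's English description precedes it below -/
import Mathlib

section
/- Let x₁, x₂ be real numbers satisfying (A1) 0 < x₁ < x₂ < 1, (A2) log(x₂/x₁) < x₂, and (A3) 2·(x₂ − x₁) < x₂². Then there exists a unique λ* ∈ (0, ∞) with Λ(λ*) = λ*, and moreover this unique positive fixed point satisfies λ* > 1. -/
/-- Under (A1)-(A3), the map Λ(λ) = (x₂/x₁)^λ·(1 + λ·(1 − x₂)) − 1
has a unique positive fixed point, and this fixed point is strictly larger than 1. -/
theorem stmt0 (x₁ x₂ : ℝ)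
    (hA1 : 0 < x₁ ∧ x₁ < x₂ ∧ x₂ < 1)
    (hA2 : Real.log (x₂ / x₁) < x₂)
    (hA3 : 2 * (x₂ - x₁) < x₂ ^ 2) :
    (∃! l : ℝ, 0 < l ∧ (x₂ / x₁) ^ l * (1 + l * (1 - x₂)) - 1 = l) ∧
    (∀ l : ℝ, 0 < l → (x₂ / x₁) ^ l * (1 + l * (1 - x₂)) - 1 = l → 1 < l) := by
  obtain ⟨hx1, hx12, hx2⟩ := hA1
  set a : ℝ := 1 - x₂ with ha_def
  set c : ℝ := Real.log (x₂ / x₁) with hc_def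
  have ha : 0 < a := by simp [ha_def]; linarith
  have ha1 : a < 1 := by simp [ha_def]; linarith
  have hrpos : (0:ℝ) < x₂ / x₁ := div_pos (lt_trans hx1 hx12) hx1
  have hr : 1 < x₂ / x₁ := (one_lt_div hx1).2 hx12
  have hc : 0 < c := Real.log_pos hr
  set f : ℝ → ℝ := fun l => Real.exp (c * l) * (1 + a * l) - 1 - l with hf_def
  -- rewrite the fixed point equation in terms of f
  have hrw : ∀ l : ℝ, ((x₂ / x₁) ^ l * (1 + l * (1 - x₂)) - 1 = l) ↔ f l = 0 := by
    intro l
    have h1 : (x₂ / x₁) ^ l = Real.exp (c * l) := by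
      rw [Real.rpow_def_of_pos hrpos]
    rw [hf_def]
    simp only [h1, ha_def]
    constructor <;> intro h <;> linear_combination h
  -- derivative
  set f' : ℝ → ℝ := fun l => Real.exp (c * l) * (c * (1 + a * l) + a) - 1 with hf'_def
  have hder : ∀ l : ℝ, HasDerivAt f (f' l) l := by
    intro l
    have h1 : HasDerivAt (fun x : ℝ => c * x) c l := by
      simpa using (hasDerivAt_id l).const_mul c
    have h2 : HasDerivAt (fun x : ℝ => Real.exp (c * x)) (Real.exp (c * l) * c) l := h1.exp
    have h3 : HasDerivAt (fun x : ℝ => 1 + a * x) a l := by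
      simpa using ((hasDerivAt_id l).const_mul a).const_add 1
    have h4 : HasDerivAt (fun x : ℝ => Real.exp (c * x) * (1 + a * x))
        (Real.exp (c * l) * c * (1 + a * l) + Real.exp (c * l) * a) l := h2.mul h3
    have h5 : HasDerivAt (fun x : ℝ => Real.exp (c * x) * (1 + a * x) - 1 - x)
        (Real.exp (c * l) * c * (1 + a * l) + Real.exp (c * l) * a - 1) l :=
      (h4.sub_const 1).sub (hasDerivAt_id l)
    convert h5 using 1
    simp [hf'_def]
    ring
  have hder2 : ∀ l : ℝ,
      HasDerivAt f' (Real.exp (c * l) * (c * (c * (1 + a * l) + a) + c * a)) l := by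
    intro l
    have h1 : HasDerivAt (fun x : ℝ => c * x) c l := by
      simpa using (hasDerivAt_id l).const_mul c
    have h2 : HasDerivAt (fun x : ℝ => Real.exp (c * x)) (Real.exp (c * l) * c) l := h1.exp
    have h3 : HasDerivAt (fun x : ℝ => c * (1 + a * x) + a) (c * a) l := by
      have : HasDerivAt (fun x : ℝ => 1 + a * x) a l := by
        simpa using ((hasDerivAt_id l).const_mul a).const_add 1
      simpa using (this.const_mul c).add_const a
    have h4 : HasDerivAt (fun x : ℝ => Real.exp (c * x) * (c * (1 + a * x) + a) - 1)
        (Real.exp (c * l) * c * (c * (1 + a * l) + a) + Real.exp (c * l) * (c * a)) l :=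
      (h2.mul h3).sub_const 1
    convert h4 using 1
    ring
  have hcont : Continuous f := by
    apply Continuous.sub
    apply Continuous.sub
    · exact (Real.continuous_exp.comp (continuous_const.mul continuous_id)).mul
        (continuous_const.add (continuous_const.mul continuous_id))
    · exact continuous_const
    · exact continuous_id
  -- strict convexity on [0, ∞)
  have hconv : StrictConvexOn ℝ (Set.Ici (0:ℝ)) f := by
    apply strictConvexOn_of_deriv2_pos (convex_Ici 0) hcont.continuousOn
    intro x hx
    rw [interior_Ici] at hx
    have hx0 : (0:ℝ) < x := hx
    have hd1 : deriv f = f' := funext fun l => (hder l).deriv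
    have : deriv^[2] f x = deriv (deriv f) x := by
      simp [Function.iterate_succ, Function.iterate_zero, Function.comp]
    rw [this, hd1, (hder2 x).deriv]
    have h1 : 0 < 1 + a * x := by positivity
    have h2 : 0 < Real.exp (c * x) := Real.exp_pos _
    have hca : 0 < c * a := mul_pos hc ha
    have h3 : 0 < c * (1 + a * x) := mul_pos hc h1
    have h4 : 0 < c * (c * (1 + a * x) + a) := mul_pos hc (by linarith)
    exact mul_pos h2 (by linarith)
  have hf0 : f 0 = 0 := by simp [hf_def]
  -- f 1 < 0 from (A3)
  have hexp1 : Real.exp (c * 1) = x₂ / x₁ := by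
    rw [mul_one, hc_def, Real.exp_log hrpos]
  have hf1 : f 1 < 0 := by
    have h2 : x₂ * (1 + a) < 2 * x₁ := by nlinarith
    have h3 : x₂ / x₁ * (1 + a) < 2 := by
      rw [div_mul_eq_mul_div, div_lt_iff₀ hx1]; linarith
    have : f 1 = Real.exp (c * 1) * (1 + a * 1) - 1 - 1 := by simp only [hf_def]
    rw [this, hexp1, mul_one]
    linarith
  -- a large point where f is positive
  obtain ⟨L, hL1, hfL⟩ : ∃ L : ℝ, 1 < L ∧ 0 < f L := by
    refine ⟨max 2 ((Real.log (1 / a) + 1) / c), lt_of_lt_of_le one_lt_two (le_max_left _ _), ?_⟩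
    set L : ℝ := max 2 ((Real.log (1 / a) + 1) / c) with hL_def
    have hL0 : 0 < L := lt_of_lt_of_le two_pos (le_max_left _ _)
    have hLge : (Real.log (1 / a) + 1) / c ≤ L := le_max_right _ _
    have hcL : Real.log (1 / a) < c * L := by
      have := (div_le_iff₀ hc).1 hLge
      linarith
    have hexpL : 1 / a < Real.exp (c * L) := by
      rw [← Real.exp_log (show (0:ℝ) < 1 / a by positivity)]
      exact Real.exp_lt_exp.2 hcL
    have h1 : 0 < 1 + a * L := by positivity
    have h2 : (1 / a) * (1 + a * L) = 1 / a + L := by field_simp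
    have h3 : (1:ℝ) < 1 / a := (one_lt_div ha).2 ha1
    have h4 : (1 / a) * (1 + a * L) < Real.exp (c * L) * (1 + a * L) :=
      mul_lt_mul_of_pos_right hexpL h1
    simp only [hf_def]
    nlinarith
  -- existence of a zero in (1, L)
  have hIVT := intermediate_value_Ioo (le_of_lt hL1) hcont.continuousOn
  have h0mem : (0:ℝ) ∈ Set.Ioo (f 1) (f L) := ⟨hf1, hfL⟩
  obtain ⟨l, hlmem, hfl⟩ := hIVT h0mem
  obtain ⟨hl1, hlL⟩ := hlmem
  have hlpos : 0 < l := lt_trans one_pos hl1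
  -- no two distinct positive zeros (using strict convexity and f 0 = 0)
  have hpair : ∀ p q : ℝ, 0 < p → p < q → f p = 0 → f q = 0 → False := by
    intro p q hp hpq hfp hfq
    have hq : 0 < q := lt_trans hp hpq
    have ht : 0 < (q - p) / q := div_pos (by linarith) hq
    have hs : 0 < p / q := div_pos hp hq
    have hts : (q - p) / q + p / q = 1 := by field_simp; ring
    have hne : (0:ℝ) ≠ q := ne_of_lt hq
    have := hconv.2 (Set.mem_Ici.2 le_rfl) (Set.mem_Ici.2 hq.le) hne ht hs hts
    rw [smul_eq_mul, smul_eq_mul, hf0, hfq] at this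
    have heq : (q - p) / q * 0 + p / q * q = p := by field_simp; ring
    rw [heq] at this
    rw [hfp] at this
    simp at this
  have huniq : ∀ m : ℝ, 0 < m → f m = 0 → m = l := by
    intro m hm hfm
    rcases lt_trichotomy m l with h | h | h
    · exact absurd (hpair m l hm h hfm hfl) (fun h => h)
    · exact h
    · exact absurd (hpair l m hlpos h hfl hfm) (fun h => h)
  constructor
  · refine ⟨l, ⟨hlpos, (hrw l).2 hfl⟩, ?_⟩
    intro m ⟨hm, hfm⟩
    exact huniq m hm ((hrw m).1 hfm)
  · intro m hm hfm
    have := huniq m hm ((hrw m).1 hfm)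
    rw [this]; exact hl1
end

section
/- Let 0 < x₁* < x₂* < 1 and let f, k : ℝ → ℝ be twice differentiable on an open interval containing [x₁*, x₂*], and set y = f + k. Assume y′(x) < 0 and y″(x) ≤ 0 for all x ∈ [x₁*, x₂*]. Define A(x) = x·y(x) + (1 − x)·x₂*·y(x₂*) − (2 − x₁*)·x₁*·y(x₁*) and B(x) = x·k(x) + (1 − x)·x₂*·k(x₂*) − (2 − x₁*)·x₁*·k(x₁*). If B(x₁*) > A(x₁*) > 0 and B(x₂*) > 0 > A(x₂*), then there exists a unique x₀ ∈ [x₁*, x₂*] with A(x₀) = 0. -/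
/-- Under the shape restrictions on y = f + k, the inequalities
B(x₁*) > A(x₁*) > 0 and B(x₂*) > 0 > A(x₂*) imply that there exists a unique
x₀ ∈ [x₁*, x₂*] with A(x₀) = 0. -/
theorem stmt1 (x₁ x₂ u v : ℝ) (f k : ℝ → ℝ)
    (hx0 : 0 < x₁) (hx12 : x₁ < x₂) (hx1 : x₂ < 1)
    (hu : u < x₁) (hv : x₂ < v)
    (hf : ∀ x ∈ Set.Ioo u v, DifferentiableAt ℝ f x ∧ DifferentiableAt ℝ (deriv f) x)
    (hk : ∀ x ∈ Set.Ioo u v, DifferentiableAt ℝ k x ∧ DifferentiableAt ℝ (deriv k) x)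
    (y : ℝ → ℝ) (hy : y = fun x => f x + k x)
    (hy' : ∀ x ∈ Set.Icc x₁ x₂, deriv y x < 0)
    (hy'' : ∀ x ∈ Set.Icc x₁ x₂, deriv (deriv y) x ≤ 0)
    (A B : ℝ → ℝ)
    (hA : A = fun x => x * y x + (1 - x) * (x₂ * y x₂) - (2 - x₁) * (x₁ * y x₁))
    (hB : B = fun x => x * k x + (1 - x) * (x₂ * k x₂) - (2 - x₁) * (x₁ * k x₁))
    (hb : B x₁ > A x₁ ∧ A x₁ > 0)
    (hc : B x₂ > 0 ∧ 0 > A x₂) :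
    ∃! x₀ : ℝ, x₀ ∈ Set.Icc x₁ x₂ ∧ A x₀ = 0 := by
  have hopen : IsOpen (Set.Ioo u v) := isOpen_Ioo
  have hsub : Set.Icc x₁ x₂ ⊆ Set.Ioo u v := fun x hx =>
    ⟨lt_of_lt_of_le hu hx.1, lt_of_le_of_lt hx.2 hv⟩
  -- differentiability of y
  have hyd : ∀ x ∈ Set.Ioo u v, DifferentiableAt ℝ y x := by
    intro x hx; rw [hy]; exact ((hf x hx).1).add ((hk x hx).1)
  have hyderiv : ∀ x ∈ Set.Ioo u v, HasDerivAt y (deriv f x + deriv k x) x := by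
    intro x hx; rw [hy]
    exact ((hf x hx).1.hasDerivAt).add ((hk x hx).1.hasDerivAt)
  have hyd' : ∀ x ∈ Set.Ioo u v, DifferentiableAt ℝ (deriv y) x := by
    intro x hx
    have heq : deriv y =ᶠ[nhds x] fun z => deriv f z + deriv k z := by
      filter_upwards [hopen.mem_nhds hx] with z hz
      exact (hyderiv z hz).deriv
    exact (((hf x hx).2).add ((hk x hx).2)).congr_of_eventuallyEq heq
  set c : ℝ := x₂ * y x₂ with hcdef
  -- first derivative of A
  have hA1 : ∀ x ∈ Set.Ioo u v,
      HasDerivAt A (y x + x * deriv y x - c) x := by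
    intro x hx
    have h1 : HasDerivAt (fun z => z * y z) (1 * y x + x * deriv y x) x :=
      (hasDerivAt_id x).mul (hyd x hx).hasDerivAt
    have h2 : HasDerivAt (fun z : ℝ => (1 - z) * c) ((0 - 1) * c) x :=
      ((hasDerivAt_const x (1:ℝ)).sub (hasDerivAt_id x)).mul_const c
    have h3 : HasDerivAt (fun z => z * y z + (1 - z) * c - (2 - x₁) * (x₁ * y x₁))
        (1 * y x + x * deriv y x + (0 - 1) * c) x := (h1.add h2).sub_const _
    rw [hA]
    convert h3 using 1
    ring
  have hA1' : ∀ x ∈ Set.Ioo u v,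
      deriv A x = y x + x * deriv y x - c := fun x hx => (hA1 x hx).deriv
  -- second derivative of A
  have hA2 : ∀ x ∈ Set.Ioo u v,
      deriv (deriv A) x = 2 * deriv y x + x * deriv (deriv y) x := by
    intro x hx
    have heq : deriv A =ᶠ[nhds x] fun z => y z + z * deriv y z - c := by
      filter_upwards [hopen.mem_nhds hx] with z hz
      exact hA1' z hz
    have h1 : HasDerivAt (fun z => y z + z * deriv y z - c)
        (deriv y x + (1 * deriv y x + x * deriv (deriv y) x)) x := by
      exact (((hyd x hx).hasDerivAt).add
        ((hasDerivAt_id x).mul (hyd' x hx).hasDerivAt)).sub_const c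
    rw [heq.deriv_eq, h1.deriv]; ring
  -- A continuous on Icc
  have hAc : ContinuousOn A (Set.Icc x₁ x₂) := by
    intro x hx
    have : DifferentiableAt ℝ A x := (hA1 x (hsub hx)).differentiableAt
    exact this.continuousAt.continuousWithinAt
  -- strict concavity
  have hconc : StrictConcaveOn ℝ (Set.Icc x₁ x₂) A := by
    apply strictConcaveOn_of_deriv2_neg (convex_Icc x₁ x₂) hAc
    intro x hx
    rw [interior_Icc] at hx
    have hx' : x ∈ Set.Icc x₁ x₂ := Set.Ioo_subset_Icc_self hx
    have hxuv : x ∈ Set.Ioo u v := hsub hx'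
    show deriv (deriv A) x < 0
    rw [hA2 x hxuv]
    have h1 : deriv y x < 0 := hy' x hx'
    have h2 : deriv (deriv y) x ≤ 0 := hy'' x hx'
    have hxpos : 0 < x := lt_trans hx0 hx.1
    nlinarith
  -- existence via IVT
  obtain ⟨x₀, hx₀mem, hx₀⟩ : ∃ x₀ ∈ Set.Icc x₁ x₂, A x₀ = 0 := by
    have h0 : (0:ℝ) ∈ Set.Icc (A x₂) (A x₁) := ⟨le_of_lt hc.2, le_of_lt hb.2⟩
    have := intermediate_value_Icc' (le_of_lt hx12) hAc h0
    obtain ⟨x₀, hmem, heq⟩ := this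
    exact ⟨x₀, hmem, heq⟩
  refine ⟨x₀, ⟨hx₀mem, hx₀⟩, ?_⟩
  -- uniqueness
  have key : ∀ a b : ℝ, a ∈ Set.Icc x₁ x₂ → b ∈ Set.Icc x₁ x₂ → A a = 0 → A b = 0 →
      a < b → False := by
    intro a b ha hb' hAa hAb hab
    have hx1a : x₁ < a := by
      rcases lt_or_eq_of_le ha.1 with h | h
      · exact h
      · exfalso; rw [← h] at hAa; linarith [hb.2]
    -- a = t * x₁ + s * b with t, s > 0, t + s = 1
    set t : ℝ := (b - a) / (b - x₁) with ht
    set s : ℝ := (a - x₁) / (b - x₁) with hs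
    have hbx1 : 0 < b - x₁ := by linarith
    have htpos : 0 < t := div_pos (by linarith) hbx1
    have hspos : 0 < s := div_pos (by linarith) hbx1
    have hts : t + s = 1 := by rw [ht, hs]; field_simp; ring
    have hcomb : t • x₁ + s • b = a := by
      show t * x₁ + s * b = a
      rw [ht, hs]; field_simp; ring
    have hne : x₁ ≠ b := by linarith
    have := hconc.2 (Set.left_mem_Icc.2 (le_of_lt hx12)) hb' hne htpos hspos hts
    rw [hcomb, hAa, hAb, smul_eq_mul, smul_eq_mul] at this
    nlinarith [hb.2]
  intro z hz
  by_contra hne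
  rcases lt_or_gt_of_ne hne with h | h
  · exact key z x₀ hz.1 hx₀mem hz.2 hx₀ h
  · exact key x₀ z hx₀mem hz.1 hx₀ hz.2 h
end

section
/- Let x₁, x₂ be real numbers with 0 < x₁ < x₂ < 1. Then the map Λ(λ) = (x₂/x₁)^λ · (1 + λ·(1 − x₂)) − 1 is strictly increasing and strictly convex on (0, ∞). -/
/-- The map Λ(λ) = (x₂/x₁)^λ·(1 + λ·(1 − x₂)) − 1 is strictly
increasing and strictly convex on (0, ∞). -/
theorem stmt3 (x₁ x₂ : ℝ) (h0 : 0 < x₁) (h12 : x₁ < x₂) (h21 : x₂ < 1) :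
    StrictMonoOn (fun l : ℝ => (x₂ / x₁) ^ l * (1 + l * (1 - x₂)) - 1) (Set.Ioi 0) ∧
    StrictConvexOn ℝ (Set.Ioi 0)
      (fun l : ℝ => (x₂ / x₁) ^ l * (1 + l * (1 - x₂)) - 1) := by
  have hr : (0:ℝ) < x₂ / x₁ := div_pos (h0.trans h12) h0
  have hr1 : 1 < x₂ / x₁ := (one_lt_div h0).2 h12
  set r := x₂ / x₁ with hrdef
  set L := Real.log r with hLdef
  have hL : 0 < L := Real.log_pos hr1
  set c := 1 - x₂ with hcdef
  have hc : 0 < c := by simp only [hcdef]; linarith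
  have hfun : (fun l : ℝ => r ^ l * (1 + l * c) - 1)
      = fun l : ℝ => Real.exp (L * l) * (1 + l * c) - 1 := by
    funext l; rw [Real.rpow_def_of_pos hr]
  have hd1 : ∀ l : ℝ, HasDerivAt (fun l : ℝ => Real.exp (L * l) * (1 + l * c) - 1)
      (Real.exp (L * l) * (L * (1 + l * c) + c)) l := by
    intro l
    have h1 : HasDerivAt (fun l : ℝ => Real.exp (L * l)) (Real.exp (L * l) * L) l := by
      simpa [Function.comp_def] using (Real.hasDerivAt_exp (L * l)).comp l ((hasDerivAt_id l).const_mul L)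
    have h2 : HasDerivAt (fun l : ℝ => 1 + l * c) c l := by
      simpa using (((hasDerivAt_id l).mul_const c).const_add 1)
    have := (h1.mul h2).sub_const 1
    exact this.congr_deriv (by ring)
  have hd2 : ∀ l : ℝ, HasDerivAt (fun l : ℝ => Real.exp (L * l) * (L * (1 + l * c) + c))
      (Real.exp (L * l) * (L * (L * (1 + l * c) + c) + L * c)) l := by
    intro l
    have h1 : HasDerivAt (fun l : ℝ => Real.exp (L * l)) (Real.exp (L * l) * L) l := by
      simpa [Function.comp_def] using (Real.hasDerivAt_exp (L * l)).comp l ((hasDerivAt_id l).const_mul L)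
    have h2 : HasDerivAt (fun l : ℝ => L * (1 + l * c) + c) (L * c) l := by
      have : HasDerivAt (fun l : ℝ => 1 + l * c) c l := by
        simpa using (((hasDerivAt_id l).mul_const c).const_add 1)
      simpa using ((this.const_mul L).add_const c)
    have := h1.mul h2
    exact this.congr_deriv (by ring)
  have hderiv : deriv (fun l : ℝ => Real.exp (L * l) * (1 + l * c) - 1)
      = fun l : ℝ => Real.exp (L * l) * (L * (1 + l * c) + c) := by
    funext l; exact (hd1 l).deriv
  have hderiv2 : deriv^[2] (fun l : ℝ => Real.exp (L * l) * (1 + l * c) - 1)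
      = fun l : ℝ => Real.exp (L * l) * (L * (L * (1 + l * c) + c) + L * c) := by
    show deriv (deriv^[1] _) = _
    rw [Function.iterate_one, hderiv]
    funext l; exact (hd2 l).deriv
  have hcont : ContinuousOn (fun l : ℝ => Real.exp (L * l) * (1 + l * c) - 1) (Set.Ioi 0) := by
    fun_prop
  rw [hfun]
  constructor
  · apply strictMonoOn_of_deriv_pos (convex_Ioi 0) hcont
    intro x hx
    rw [interior_Ioi] at hx
    rw [hderiv]; beta_reduce
    have hx' : (0:ℝ) < x := hx
    have h1 : (0:ℝ) < 1 + x * c := by nlinarith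
    exact mul_pos (Real.exp_pos _) (add_pos (mul_pos hL h1) hc)
  · apply strictConvexOn_of_deriv2_pos (convex_Ioi 0) hcont
    intro x hx
    rw [interior_Ioi] at hx
    rw [hderiv2]; beta_reduce
    have hx' : (0:ℝ) < x := hx
    have h1 : (0:ℝ) < 1 + x * c := by nlinarith
    exact mul_pos (Real.exp_pos _)
      (add_pos (mul_pos hL (add_pos (mul_pos hL h1) hc)) (mul_pos hL hc))
end

section
/- Let x₁, x₂ be real numbers with 0 < x₁ < x₂ < 1. Then Λ′(λ) tends to log(x₂/x₁) + 1 − x₂ as λ → 0⁺. Consequently, if in addition log(x₂/x₁) < x₂, then there exists λ > 0 with Λ(λ) < λ. -/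
open Real Filter Set

/-- Λ′(λ) → log(x₂/x₁) + 1 − x₂ as λ → 0⁺; consequently, if
log(x₂/x₁) < x₂ then there exists λ > 0 with Λ(λ) < λ. -/
theorem stmt7 (x₁ x₂ : ℝ) (h0 : 0 < x₁) (h12 : x₁ < x₂) (h21 : x₂ < 1) :
    Filter.Tendsto (deriv (fun l : ℝ => (x₂ / x₁) ^ l * (1 + l * (1 - x₂)) - 1))
      (nhdsWithin 0 (Set.Ioi 0)) (nhds (Real.log (x₂ / x₁) + 1 - x₂)) ∧
    (Real.log (x₂ / x₁) < x₂ →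
      ∃ l : ℝ, 0 < l ∧ (x₂ / x₁) ^ l * (1 + l * (1 - x₂)) - 1 < l) := by
  set r := x₂ / x₁ with hr
  have hrpos : 0 < r := div_pos (h0.trans h12) h0
  have hd : ∀ x : ℝ, HasDerivAt (fun l : ℝ => r ^ l * (1 + l * (1 - x₂)) - 1)
      (r ^ x * Real.log r * (1 + x * (1 - x₂)) + r ^ x * (1 - x₂)) x := by
    intro x
    have h1 : HasDerivAt (fun l : ℝ => r ^ l) (r ^ x * Real.log r) x :=
      (Real.hasStrictDerivAt_const_rpow hrpos x).hasDerivAt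
    have h2 : HasDerivAt (fun l : ℝ => 1 + l * (1 - x₂)) (1 - x₂) x := by
      simpa using ((hasDerivAt_id x).mul_const (1 - x₂)).const_add 1
    have := (h1.mul h2).sub_const 1
    exact this
  have hderiv : (deriv (fun l : ℝ => r ^ l * (1 + l * (1 - x₂)) - 1)) =
      fun x => r ^ x * Real.log r * (1 + x * (1 - x₂)) + r ^ x * (1 - x₂) := by
    funext x; exact (hd x).deriv
  constructor
  · rw [hderiv]
    have hc : Continuous fun x : ℝ => r ^ x * Real.log r * (1 + x * (1 - x₂)) + r ^ x * (1 - x₂) := by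
      have hcr : Continuous fun x : ℝ => r ^ x :=
        (Real.continuous_exp.comp (continuous_const.mul continuous_id)).congr
          fun x => (Real.rpow_def_of_pos hrpos x).symm
      continuity
    have h := (hc.tendsto 0).mono_left (nhdsWithin_le_nhds (s := Set.Ioi (0:ℝ)))
    simpa [add_sub_assoc] using h
  · intro hlog
    have hL : Real.log r + 1 - x₂ < 1 := by linarith
    have h0d : HasDerivAt (fun l : ℝ => r ^ l * (1 + l * (1 - x₂)) - 1)
        (Real.log r + 1 - x₂) 0 := by
      simpa [add_sub_assoc] using hd 0
    have hslope := hasDerivAt_iff_tendsto_slope.mp h0d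
    have hslope' : Tendsto (slope (fun l : ℝ => r ^ l * (1 + l * (1 - x₂)) - 1) 0)
        (nhdsWithin 0 (Set.Ioi 0)) (nhds (Real.log r + 1 - x₂)) :=
      hslope.mono_left (nhdsWithin_mono 0 (fun x hx => ne_of_gt hx))
    have hev : ∀ᶠ l in nhdsWithin 0 (Set.Ioi 0),
        slope (fun l : ℝ => r ^ l * (1 + l * (1 - x₂)) - 1) 0 l < 1 :=
      hslope'.eventually (eventually_lt_nhds hL)
    obtain ⟨l, hl1, hl2⟩ := (hev.and self_mem_nhdsWithin).exists
    refine ⟨l, hl2, ?_⟩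
    have hl0 : (0:ℝ) < l := hl2
    rw [slope_def_field] at hl1
    have : ((r ^ l * (1 + l * (1 - x₂)) - 1) - (r ^ (0:ℝ) * (1 + 0 * (1 - x₂)) - 1)) / (l - 0) < 1 := hl1
    simp only [Real.rpow_zero, zero_mul, add_zero, mul_one, sub_self, sub_zero] at this
    calc r ^ l * (1 + l * (1 - x₂)) - 1 = ((r ^ l * (1 + l * (1 - x₂)) - 1) / l) * l := by
          field_simp
      _ < 1 * l := by exact mul_lt_mul_of_pos_right this hl0
      _ = l := one_mul l
end

section
/- Let a_f, a_k ∈ ℝ, τ_f, τ_k ∈ ℝ \ {0} with τ_k + β·τ_f ≠ 0, β ∈ ℝ and λ > 0, and define ỹ(x) = (a_f − x^λ)/τ_f + β·(a_k − x^λ)/τ_k and w̃(x) = x·ỹ(x). Suppose x₂* > 0 satisfies (x₂*)^λ = (a_f·τ_k + β·a_k·τ_f)/((1 + λ)·(τ_k + β·τ_f)), and x₁* > 0 satisfies (x₁*)^λ = (x₂*)^λ·(1 − (λ/(1 + λ))·x₂*). Then ỹ(x₁*) + x₁*·ỹ′(x₁*) = x₂*·ỹ(x₂*), i.e. w̃′(x₁*)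 = w̃(x₂*), which is the first-order condition for the optimal first-serve strategy. -/
/-!
Writing ỹ(x) = A - B·x^λ, the marginal perceived winning probability is
w̃′(x) = ỹ(x) + x·ỹ′(x) = A - (1 + λ)·B·x^λ. The closed form for x₂* says exactly that
(1 + λ)·B·(x₂*)^λ = A, and substituting it together with the closed form for x₁* turns both
sides of w̃′(x₁*) = w̃(x₂*) into λ·B·x₂*·(x₂*)^λ.
-/

theorem deriv_const_sub_mul_rpow {A B lam x : ℝ} (hx : x ≠ 0) :
    deriv (fun t : ℝ => A - B * t ^ lam) x = -(B * (lam * x ^ (lam - 1))) := by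
  simpa using ((Real.hasDerivAt_rpow_const (Or.inl hx)).const_mul B).const_sub A |>.deriv

theorem const_sub_mul_rpow_add_mul_deriv {A B lam x : ℝ} (hx : x ≠ 0) :
    (A - B * x ^ lam) + x * deriv (fun t : ℝ => A - B * t ^ lam) x
      = A - (1 + lam) * B * x ^ lam := by
  rw [deriv_const_sub_mul_rpow hx, Real.rpow_sub_one hx]
  field_simp
  ring

theorem first_serve_condition_of_closed_forms {A B lam x₁ x₂ : ℝ} (hlam : 1 + lam ≠ 0)
    (h₂ : (1 + lam) * B * x₂ ^ lam = A)
    (h₁ : x₁ ^ lam = x₂ ^ lam * (1 - lam / (1 + lam) * x₂)) :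
    A - (1 + lam) * B * x₁ ^ lam = x₂ * (A - B * x₂ ^ lam) := by
  rw [h₁, ← h₂]
  field_simp
  ring

theorem stmt11_general (af ak τf τk β lam x₁ x₂ : ℝ)
    (hτf : τf ≠ 0) (hτk : τk ≠ 0) (hden : τk + β * τf ≠ 0) (hlam : 0 < lam)
    (ytil : ℝ → ℝ)
    (hy : ytil = fun x : ℝ => (af - x ^ lam) / τf + β * ((ak - x ^ lam) / τk))
    (heq₂ : x₂ ^ lam = (af * τk + β * (ak * τf)) / ((1 + lam) * (τk + β * τf)))
    (hx₁ : 0 < x₁)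
    (heq₁ : x₁ ^ lam = x₂ ^ lam * (1 - lam / (1 + lam) * x₂)) :
    ytil x₁ + x₁ * deriv ytil x₁ = x₂ * ytil x₂ := by
  have hy' : ytil = fun x : ℝ => (af / τf + β * (ak / τk)) - (1 / τf + β / τk) * x ^ lam := by
    rw [hy]
    funext x
    ring
  have hlam' : 1 + lam ≠ 0 := by positivity
  have hfoc₂ : (1 + lam) * (1 / τf + β / τk) * x₂ ^ lam = af / τf + β * (ak / τk) := by
    rw [heq₂, div_add_div _ _ hτf hτk]
    field_simp
    exact mul_div_cancel_left₀ _ (by rwa [mul_comm τf])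
  rw [hy', const_sub_mul_rpow_add_mul_deriv hx₁.ne']
  exact first_serve_condition_of_closed_forms hlam' hfoc₂ heq₁

/-- the closed forms for (x₂*)^λ and (x₁*)^λ solve the first-serve
first-order condition w̃′(x₁*) = w̃(x₂*). -/
theorem stmt11 (af ak τf τk β lam x₁ x₂ : ℝ)
    (hτf : τf ≠ 0) (hτk : τk ≠ 0) (hden : τk + β * τf ≠ 0) (hlam : 0 < lam)
    (ytil : ℝ → ℝ)
    (hy : ytil = fun x : ℝ => (af - x ^ lam) / τf + β * ((ak - x ^ lam) / τk))
    (hx₂ : 0 < x₂)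
    (heq₂ : x₂ ^ lam = (af * τk + β * (ak * τf)) / ((1 + lam) * (τk + β * τf)))
    (hx₁ : 0 < x₁)
    (heq₁ : x₁ ^ lam = x₂ ^ lam * (1 - lam / (1 + lam) * x₂)) :
    ytil x₁ + x₁ * deriv ytil x₁ = x₂ * ytil x₂ :=
  stmt11_general af ak τf τk β lam x₁ x₂ hτf hτk hden hlam ytil hy heq₂ hx₁ heq₁
end

section
/- Let λ > 0 and x₁, x₂ ∈ (0, 1) with x₁ ≠ x₂, and set z₁ = x₁^λ, z₂ = x₂^λ. Let f₁, f₂, k₁, k₂ be real numbers with f₁ ≠ f₂ and k₁ ≠ k₂, and define τ_f = −(z₁ − z₂)/(f₁ − f₂), τ_k = −(z₁ − z₂)/(k₁ − k₂), a_f = τ_f·f₁ + z₁, a_k = τ_k·k₁ + z₁. Assume a_k ≠ (1 + λ)·z₂ and a_f ≠ a_k, and define β = −(τ_k/τ_f)·(a_f − (1 + λ)·z₂)/(a_k − (1 + λ)·z₂) and R = β·τ_f/τ_k. Then 1 + R ≠ 0 and (a_f + a_k·R − x₂·(a_f + a_k·R − (1 + R)·z₂))/((1 + R)·z₁) − 1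 = (z₂/z₁)·(1 + λ·(1 − x₂)) − 1. -/
/-- the updated curvature implied by the first-serve first-order
condition simplifies to the fixed-point map (z₂/z₁)·(1 + λ·(1 − x₂)) − 1. -/
theorem stmt12 (lam x₁ x₂ f₁ f₂ k₁ k₂ z₁ z₂ τf τk af ak β R : ℝ)
    (hlam : 0 < lam)
    (hx₁ : x₁ ∈ Set.Ioo (0 : ℝ) 1) (hx₂ : x₂ ∈ Set.Ioo (0 : ℝ) 1) (hxne : x₁ ≠ x₂)
    (hf : f₁ ≠ f₂) (hk : k₁ ≠ k₂)
    (hz₁ : z₁ = x₁ ^ lam) (hz₂ : z₂ = x₂ ^ lam)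
    (hτf : τf = -(z₁ - z₂) / (f₁ - f₂)) (hτk : τk = -(z₁ - z₂) / (k₁ - k₂))
    (haf : af = τf * f₁ + z₁) (hak : ak = τk * k₁ + z₁)
    (hak' : ak ≠ (1 + lam) * z₂) (hafk : af ≠ ak)
    (hβ : β = -(τk / τf) * ((af - (1 + lam) * z₂) / (ak - (1 + lam) * z₂)))
    (hR : R = β * τf / τk) :
    1 + R ≠ 0 ∧
    (af + ak * R - x₂ * (af + ak * R - (1 + R) * z₂)) / ((1 + R) * z₁) - 1 =
      z₂ / z₁ * (1 + lam * (1 - x₂)) - 1 := by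
  obtain ⟨hx₁0, hx₁1⟩ := hx₁
  obtain ⟨hx₂0, hx₂1⟩ := hx₂
  have hz₁0 : 0 < z₁ := by rw [hz₁]; exact Real.rpow_pos_of_pos hx₁0 lam
  have hzne : z₁ ≠ z₂ := by
    rw [hz₁, hz₂]
    intro h
    exact hxne (Real.rpow_left_injOn (ne_of_gt hlam)
      (le_of_lt hx₁0) (le_of_lt hx₂0) h)
  have hzsub : z₁ - z₂ ≠ 0 := sub_ne_zero.mpr hzne
  have hτf0 : τf ≠ 0 := by
    rw [hτf]
    exact div_ne_zero (neg_ne_zero.mpr hzsub) (sub_ne_zero.mpr hf)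
  have hτk0 : τk ≠ 0 := by
    rw [hτk]
    exact div_ne_zero (neg_ne_zero.mpr hzsub) (sub_ne_zero.mpr hk)
  have hden : ak - (1 + lam) * z₂ ≠ 0 := sub_ne_zero.mpr hak'
  have hRval : R = -(af - (1 + lam) * z₂) / (ak - (1 + lam) * z₂) := by
    rw [hR, hβ]; field_simp
  have h1R : 1 + R = (ak - af) / (ak - (1 + lam) * z₂) := by
    rw [hRval]; field_simp; ring
  have h1R0 : 1 + R ≠ 0 := by
    rw [h1R]
    exact div_ne_zero (sub_ne_zero.mpr (Ne.symm hafk)) hden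
  refine ⟨h1R0, ?_⟩
  have hka : ak - af ≠ 0 := sub_ne_zero.mpr (Ne.symm hafk)
  rw [h1R, hRval]
  field_simp
  ring
end

section
/- Let w̃ : ℝ → ℝ be any function and define p̃(x₁, x₂) = w̃(x₁) + (1 − x₁)·w̃(x₂). Let x₁*, x₂* be real numbers with 0 ≤ x₁* < 1 and x₂* ≤ 1, and suppose p̃(x₁*, x₂*) ≥ p̃(x₁*, x₁*). Then w̃(x₂*) ≥ w̃(x₁*), hence p̃(x, x₂*) ≥ p̃(x, x₁*) for every x ≤ 1; and if in addition p̃(x₁*, x₂*) ≥ p̃(x₂*, x₂*), then p̃(x₁*, x₂*) ≥ p̃(x₂*, x₁*). In other words, the optimality inequality comparing the observed strategy with the swapped strategy (x₂*, x₁*) is implied by the two inequalities comparing it with the degenerate strategies (x₁*, x₁*) and (x₂*, x₂*). -/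
/-!
Changing only the second serve changes `p̃(a, ·)` by `(1 - a)` times the change in `w̃`, so the
first optimality inequality gives `w̃ x₁ ≤ w̃ x₂`. The swapped strategy is then handled by the chain
`p̃(x₂, x₁) ≤ p̃(x₂, x₂) ≤ p̃(x₁, x₂)`.
-/

section SecondServe

variable {α : Type*} [CommRing α] [LinearOrder α] [IsStrictOrderedRing α]

def secondServeWinProb (w : α → α) (a b : α) : α :=
  w a + (1 - a) * w b

theorem secondServeWinProb_le_secondServeWinProb_iff {w : α → α} {a b c : α} (ha : a < 1) :
    secondServeWinProb w a b ≤ secondServeWinProb w a c ↔ w b ≤ w c := by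
  rw [secondServeWinProb, secondServeWinProb, add_le_add_iff_left,
    mul_le_mul_iff_of_pos_left (sub_pos.2 ha)]

theorem secondServeWinProb_le_secondServeWinProb {w : α → α} {a b c : α} (ha : a ≤ 1)
    (h : w b ≤ w c) : secondServeWinProb w a b ≤ secondServeWinProb w a c :=
  add_le_add_right (mul_le_mul_of_nonneg_left h (sub_nonneg.2 ha)) _

end SecondServe

theorem stmt15_general (w : ℝ → ℝ) (x₁ x₂ : ℝ)
    (h1 : x₁ < 1) (h2 : x₂ ≤ 1)
    (p : ℝ → ℝ → ℝ) (hp : p = fun a b => w a + (1 - a) * w b)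
    (hopt1 : p x₁ x₂ ≥ p x₁ x₁) :
    w x₂ ≥ w x₁ ∧ (∀ x : ℝ, x ≤ 1 → p x x₂ ≥ p x x₁) ∧
      (p x₁ x₂ ≥ p x₂ x₂ → p x₁ x₂ ≥ p x₂ x₁) := by
  obtain rfl : p = secondServeWinProb w := hp
  have hw : w x₁ ≤ w x₂ := (secondServeWinProb_le_secondServeWinProb_iff h1).1 hopt1
  have hmono : ∀ x : ℝ, x ≤ 1 → secondServeWinProb w x x₁ ≤ secondServeWinProb w x x₂ :=
    fun x hx => secondServeWinProb_le_secondServeWinProb hx hw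
  exact ⟨hw, hmono, fun hopt2 => (hmono x₂ h2).trans hopt2⟩

/-- the optimality inequality against the swapped strategy (x₂*, x₁*)
is implied by the two inequalities against the degenerate strategies. -/
theorem stmt15 (w : ℝ → ℝ) (x₁ x₂ : ℝ)
    (h0 : 0 ≤ x₁) (h1 : x₁ < 1) (h2 : x₂ ≤ 1)
    (p : ℝ → ℝ → ℝ) (hp : p = fun a b => w a + (1 - a) * w b)
    (hopt1 : p x₁ x₂ ≥ p x₁ x₁) :
    w x₂ ≥ w x₁ ∧ (∀ x : ℝ, x ≤ 1 → p x x₂ ≥ p x x₁) ∧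
      (p x₁ x₂ ≥ p x₂ x₂ → p x₁ x₂ ≥ p x₂ x₁) :=
  stmt15_general w x₁ x₂ h1 h2 p hp hopt1
end

section
/- Let λ > 0, let x₁, x₂ ∈ (0, 1) with x₁ ≠ x₂, and set z₁ = exp(λ·x₁), z₂ = exp(λ·x₂). Let a_f, a_k, τ_f, τ_k ∈ ℝ and define f(x) = a_f + τ_f·exp(λ·x), k(x) = a_k + τ_k·exp(λ·x), with f_j = f(x_j), k_j = k(x_j) for j = 1, 2. Assume M := k₂·(z₂ − z₁) + λ·x₂·z₂·(k₂ − k₁) ≠ 0 and set β = −(f₂·(z₂ − z₁) + λ·x₂·z₂·(f₂ − f₁))/M. If f₁·k₂ ≠ f₂·k₁ and x₁·z₁ − x₂·(1 − x₂)·z₂ ≠ 0, then the first-serve first-order condition (f(x₁) + β·k(x₁)) + x₁·λ·(τ_f + β·τ_k)·z₁ = x₂·(f(x₂) + β·k(x₂)) holds if and only if λ = (z₂ − z₁)/(x₁·z₁ − x₂·(1 − x₂)·z₂). -/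
/-!
Put `g = f + β k`; it is again of the form `a + τ exp (λ x)`, with `a = a_f + β a_k` and
`τ = τ_f + β τ_k`. The definition of `β` says exactly `(z₂ - z₁) (g x₂ + x₂ g' x₂) = 0`, the
second-serve condition for `g`. Eliminating `a` with it turns the first-serve condition into
`τ (λ (x₁ z₁ - x₂ (1 - x₂) z₂) - (z₂ - z₁)) = 0`. Finally `τ ≠ 0` (and `z₁ ≠ z₂`), since otherwise
`f + β k` vanishes at both points, or `f` and `k` take equal values there, and either way
`f₁ k₂ = f₂ k₁`.
-/

lemma mul_eq_mul_of_add_mul_eq_zero {f₁ f₂ k₁ k₂ β : ℝ}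
    (h₁ : f₁ + β * k₁ = 0) (h₂ : f₂ + β * k₂ = 0) : f₁ * k₂ = f₂ * k₁ := by
  linear_combination k₂ * h₁ - k₁ * h₂

lemma affine_foc_of_secant_eq_zero {a τ lam x₂ z₁ z₂ : ℝ} (hz : z₁ ≠ z₂)
    (h : (a + τ * z₂) * (z₂ - z₁) + lam * x₂ * z₂ * ((a + τ * z₂) - (a + τ * z₁)) = 0) :
    a + τ * z₂ + x₂ * (lam * τ * z₂) = 0 := by
  have hfactor : (z₂ - z₁) * (a + τ * z₂ + x₂ * (lam * τ * z₂)) = 0 := by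
    linear_combination h
  exact (mul_eq_zero.mp hfactor).resolve_left (sub_ne_zero.mpr hz.symm)

lemma affine_first_foc_iff {a τ lam x₁ x₂ z₁ z₂ : ℝ} (hτ : τ ≠ 0)
    (hden : x₁ * z₁ - x₂ * (1 - x₂) * z₂ ≠ 0)
    (hsecond : a + τ * z₂ + x₂ * (lam * τ * z₂) = 0) :
    (a + τ * z₁) + x₁ * (lam * τ * z₁) = x₂ * (a + τ * z₂) ↔
      lam = (z₂ - z₁) / (x₁ * z₁ - x₂ * (1 - x₂) * z₂) := by
  have hreduce : (a + τ * z₁) + x₁ * (lam * τ * z₁) - x₂ * (a + τ * z₂) =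
      τ * (lam * (x₁ * z₁ - x₂ * (1 - x₂) * z₂) - (z₂ - z₁)) := by
    linear_combination (1 - x₂) * hsecond
  rw [← sub_eq_zero, hreduce, mul_eq_zero, or_iff_right hτ, sub_eq_zero, eq_div_iff hden]

theorem stmt16_general (lam x₁ x₂ af ak τf τk z₁ z₂ β : ℝ)
    (hz₁ : z₁ = Real.exp (lam * x₁)) (hz₂ : z₂ = Real.exp (lam * x₂))
    (f k : ℝ → ℝ)
    (hf : f = fun x => af + τf * Real.exp (lam * x))
    (hk : k = fun x => ak + τk * Real.exp (lam * x))
    (hM : k x₂ * (z₂ - z₁) + lam * x₂ * z₂ * (k x₂ - k x₁) ≠ 0)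
    (hβ : β = -(f x₂ * (z₂ - z₁) + lam * x₂ * z₂ * (f x₂ - f x₁)) /
        (k x₂ * (z₂ - z₁) + lam * x₂ * z₂ * (k x₂ - k x₁)))
    (hfk : f x₁ * k x₂ ≠ f x₂ * k x₁)
    (hden : x₁ * z₁ - x₂ * (1 - x₂) * z₂ ≠ 0) :
    ((f x₁ + β * k x₁) + x₁ * (lam * (τf + β * τk) * z₁) = x₂ * (f x₂ + β * k x₂)) ↔
      lam = (z₂ - z₁) / (x₁ * z₁ - x₂ * (1 - x₂) * z₂) := by
  have hf₁ : f x₁ = af + τf * z₁ := by rw [hf, hz₁]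
  have hf₂ : f x₂ = af + τf * z₂ := by rw [hf, hz₂]
  have hk₁ : k x₁ = ak + τk * z₁ := by rw [hk, hz₁]
  have hk₂ : k x₂ = ak + τk * z₂ := by rw [hk, hz₂]
  have hz : z₁ ≠ z₂ := by
    rintro rfl
    exact hfk (by rw [hf₁, hf₂, hk₁, hk₂])
  have hβM := hβ ▸ div_mul_cancel₀ _ hM
  have hsecond : (af + β * ak) + (τf + β * τk) * z₂ + x₂ * (lam * (τf + β * τk) * z₂) = 0 := by
    apply affine_foc_of_secant_eq_zero hz
    rw [hf₁, hf₂, hk₁, hk₂] at hβM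
    linear_combination hβM
  have hτ : τf + β * τk ≠ 0 := by
    intro hτ₀
    have ha : af + β * ak = 0 := by linear_combination hsecond - (z₂ + x₂ * lam * z₂) * hτ₀
    refine hfk (mul_eq_mul_of_add_mul_eq_zero (β := β) ?_ ?_)
    · rw [hf₁, hk₁]; linear_combination ha + z₁ * hτ₀
    · rw [hf₂, hk₂]; linear_combination ha + z₂ * hτ₀
  rw [← affine_first_foc_iff hτ hden hsecond, hf₁, hf₂, hk₁, hk₂]
  constructor <;> intro h <;> linear_combination h

/-- in the softmax (CARA) parametrization, the first-serve first-order
condition holds iff λ = (z₂ − z₁)/(x₁·z₁ − x₂·(1 − x₂)·z₂). -/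
theorem stmt16 (lam x₁ x₂ af ak τf τk z₁ z₂ β : ℝ)
    (hlam : 0 < lam)
    (hx₁ : x₁ ∈ Set.Ioo (0 : ℝ) 1) (hx₂ : x₂ ∈ Set.Ioo (0 : ℝ) 1) (hxne : x₁ ≠ x₂)
    (hz₁ : z₁ = Real.exp (lam * x₁)) (hz₂ : z₂ = Real.exp (lam * x₂))
    (f k : ℝ → ℝ)
    (hf : f = fun x => af + τf * Real.exp (lam * x))
    (hk : k = fun x => ak + τk * Real.exp (lam * x))
    (hM : k x₂ * (z₂ - z₁) + lam * x₂ * z₂ * (k x₂ - k x₁) ≠ 0)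
    (hβ : β = -(f x₂ * (z₂ - z₁) + lam * x₂ * z₂ * (f x₂ - f x₁)) /
        (k x₂ * (z₂ - z₁) + lam * x₂ * z₂ * (k x₂ - k x₁)))
    (hfk : f x₁ * k x₂ ≠ f x₂ * k x₁)
    (hden : x₁ * z₁ - x₂ * (1 - x₂) * z₂ ≠ 0) :
    ((f x₁ + β * k x₁) + x₁ * (lam * (τf + β * τk) * z₁) = x₂ * (f x₂ + β * k x₂)) ↔
      lam = (z₂ - z₁) / (x₁ * z₁ - x₂ * (1 - x₂) * z₂) :=
  stmt16_general lam x₁ x₂ af ak τf τk z₁ z₂ β hz₁ hz₂ f k hf hk hM hβ hfk hden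
end

section
/- Let a ∈ ℝ, τ ∈ ℝ \ {0}, λ > 0 and γ ∈ ℝ, and define y(x) = (a − x^λ)/τ. If x₂ > 0 satisfies x₂^λ = (a + τ·γ)/(λ + 1), then x₂·y′(x₂) + y(x₂) + γ = 0. If in addition x₁ > 0 satisfies x₁^λ = x₂^λ·(1 − (λ/(λ + 1))·x₂), then x₁·y′(x₁) + y(x₁) + γ·(1 − x₂) = x₂·y(x₂). That is, these closed forms solve the two first-order conditions of the double-fault-aversion model. -/
lemma deriv_aux (a τ lam : ℝ) (x : ℝ) (hx : 0 < x) :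
    deriv (fun x : ℝ => (a - x ^ lam) / τ) x = -(lam * x ^ (lam - 1)) / τ := by
  have h : HasDerivAt (fun x : ℝ => (a - x ^ lam) / τ)
      (-(lam * x ^ (lam - 1)) / τ) x := by
    have h1 : HasDerivAt (fun x : ℝ => x ^ lam) (lam * x ^ (lam - 1)) x := by
      simpa [mul_comm] using (Real.hasDerivAt_rpow_const (p := lam) (Or.inl hx.ne'))
    simpa using ((hasDerivAt_const x a).sub h1).div_const τ
  exact h.deriv

lemma mul_rpow_aux (lam x : ℝ) (hx : 0 < x) : x * x ^ (lam - 1) = x ^ lam :=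
  calc x * x ^ (lam - 1) = x ^ (1 : ℝ) * x ^ (lam - 1) := by rw [Real.rpow_one]
    _ = x ^ (1 + (lam - 1)) := (Real.rpow_add hx 1 (lam - 1)).symm
    _ = x ^ lam := by ring_nf

/-- the closed forms solve the two first-order conditions of the
double-fault-aversion model. -/
theorem stmt17 (a τ lam γ x₂ : ℝ) (hτ : τ ≠ 0) (hlam : 0 < lam)
    (y : ℝ → ℝ) (hy : y = fun x : ℝ => (a - x ^ lam) / τ)
    (hx₂ : 0 < x₂) (heq₂ : x₂ ^ lam = (a + τ * γ) / (lam + 1)) :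
    (x₂ * deriv y x₂ + y x₂ + γ = 0) ∧
    (∀ x₁ : ℝ, 0 < x₁ → x₁ ^ lam = x₂ ^ lam * (1 - lam / (lam + 1) * x₂) →
      x₁ * deriv y x₁ + y x₁ + γ * (1 - x₂) = x₂ * y x₂) := by
  have hl1 : lam + 1 ≠ 0 := by positivity
  have heq₂' : (lam + 1) * x₂ ^ lam = a + τ * γ := by
    field_simp at heq₂; linarith
  subst hy
  constructor
  · rw [deriv_aux a τ lam x₂ hx₂]
    have key : x₂ * (-(lam * x₂ ^ (lam - 1)) / τ) = -(lam * x₂ ^ lam) / τ := by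
      rw [← mul_rpow_aux lam x₂ hx₂]; ring
    rw [key]
    field_simp
    linear_combination -1 * heq₂'
  · intro x₁ hx₁ heq₁
    have heq₁' : (lam + 1) * x₁ ^ lam = x₂ ^ lam * ((lam + 1) - lam * x₂) := by
      field_simp at heq₁
      nlinarith [heq₁]
    rw [deriv_aux a τ lam x₁ hx₁]
    have key : x₁ * (-(lam * x₁ ^ (lam - 1)) / τ) = -(lam * x₁ ^ lam) / τ := by
      rw [← mul_rpow_aux lam x₁ hx₁]; ring
    rw [key]
    field_simp
    linear_combination (x₂ - 1) * heq₂' - heq₁'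
end
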